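/- arXiv:2501.16746 — 3 statements merged into one kernel-verified Lean document; each statement's English description precedes it below -/
import Mathlib

section
/- Suppose c : ℝ → ℝ is smooth and satisfies c''' + 3·2^(3/2)·(c')² + (4/3)τ²c' + 4τc + (√2/9)(1 + 3α − 3α²) = 0 for all τ ∈ ℝ. Define y(τ) = c(τ/√2) + τ³/108. Then y satisfies the Chazy-I equation y''' + 6(y')² + τy − τ⁴/72 + (α − α²)/6 = 0 for all τ ∈ ℝ. -/
/-- If c : ℝ → ℝ is smooth and satisfies
`c''' + 3·2^(3/2)(c')² + (4/3)τ²c' + 4τc + (√2/9)(1 + 3α − 3α²) = 0` for all τ,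
then `y(τ) = c(τ/√2) + τ³/108` satisfies the Chazy-I equation
`y''' + 6(y')² + τy − τ⁴/72 + (α − α²)/6 = 0` for all τ. -/
theorem stmt11 (α : ℝ) (c : ℝ → ℝ) (hc : ContDiff ℝ (⊤ : ℕ∞) c)
    (hode : ∀ τ : ℝ,
      iteratedDeriv 3 c τ + 3 * (2 : ℝ) ^ ((3 : ℝ) / 2) * (deriv c τ) ^ 2
          + (4 / 3) * τ ^ 2 * deriv c τ + 4 * τ * c τ
          + (Real.sqrt 2 / 9) * (1 + 3 * α - 3 * α ^ 2) = 0) :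
    ∀ τ : ℝ,
      iteratedDeriv 3 (fun t : ℝ => c (t / Real.sqrt 2) + t ^ 3 / 108) τ
          + 6 * (deriv (fun t : ℝ => c (t / Real.sqrt 2) + t ^ 3 / 108) τ) ^ 2
          + τ * (c (τ / Real.sqrt 2) + τ ^ 3 / 108)
          - τ ^ 4 / 72 + (α - α ^ 2) / 6 = 0 := by
  intro τ
  set s := Real.sqrt 2 with hsdef
  have hspos : (0:ℝ) < s := Real.sqrt_pos.mpr (by norm_num)
  have hs : s ≠ 0 := ne_of_gt hspos
  have hs2 : s ^ 2 = 2 := Real.sq_sqrt (by norm_num)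
  -- smoothness of derivatives
  have hc0 : ContDiff ℝ (⊤ : ℕ∞) c := hc.of_le (by simp)
  have hc1 : ContDiff ℝ (⊤ : ℕ∞) (deriv c) := (contDiff_infty_iff_deriv.mp hc0).2
  have hc2 : ContDiff ℝ (⊤ : ℕ∞) (deriv (deriv c)) := (contDiff_infty_iff_deriv.mp hc1).2
  have hd1 : Differentiable ℝ c := hc0.differentiable (by simp)
  have hd2 : Differentiable ℝ (deriv c) := hc1.differentiable (by simp)
  have hd3 : Differentiable ℝ (deriv (deriv c)) := hc2.differentiable (by simp)
  have hdiv : ∀ t : ℝ, HasDerivAt (fun x : ℝ => x / s) (1 / s) t := by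
    intro t
    simpa using (hasDerivAt_id t).div_const s
  -- first derivative
  have h1 : ∀ t : ℝ, HasDerivAt (fun x : ℝ => c (x / s) + x ^ 3 / 108)
      (deriv c (t / s) * (1 / s) + 3 * t ^ 2 / 108) t := by
    intro t
    exact (((hd1 (t / s)).hasDerivAt.comp t (hdiv t)).add
      (by simpa using (hasDerivAt_pow 3 t).div_const 108))
  have e1 : deriv (fun x : ℝ => c (x / s) + x ^ 3 / 108)
      = fun t : ℝ => deriv c (t / s) * (1 / s) + 3 * t ^ 2 / 108 := by
    funext t; exact (h1 t).deriv
  -- second derivative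
  have h2 : ∀ t : ℝ, HasDerivAt (fun x : ℝ => deriv c (x / s) * (1 / s) + 3 * x ^ 2 / 108)
      (deriv (deriv c) (t / s) * (1 / s) * (1 / s) + 3 * (2 * t) / 108) t := by
    intro t
    exact ((((hd2 (t / s)).hasDerivAt.comp t (hdiv t)).mul_const (1 / s)).add
      (by simpa using ((hasDerivAt_pow 2 t).const_mul (3:ℝ)).div_const 108))
  have e2 : deriv (fun t : ℝ => deriv c (t / s) * (1 / s) + 3 * t ^ 2 / 108)
      = fun t : ℝ => deriv (deriv c) (t / s) * (1 / s) * (1 / s) + 3 * (2 * t) / 108 := by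
    funext t; exact (h2 t).deriv
  -- third derivative
  have h3 : ∀ t : ℝ, HasDerivAt
      (fun x : ℝ => deriv (deriv c) (x / s) * (1 / s) * (1 / s) + 3 * (2 * x) / 108)
      (deriv (deriv (deriv c)) (t / s) * (1 / s) * (1 / s) * (1 / s) + 3 * 2 / 108) t := by
    intro t
    refine (((((hd3 (t / s)).hasDerivAt.comp t (hdiv t)).mul_const (1 / s)).mul_const
      (1 / s)).add ?_)
    have : HasDerivAt (fun x : ℝ => 3 * (2 * x)) (3 * 2) t := by
      simpa using ((hasDerivAt_id t).const_mul (2:ℝ)).const_mul (3:ℝ)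
    simpa using this.div_const 108
  have e3 : deriv (fun t : ℝ => deriv (deriv c) (t / s) * (1 / s) * (1 / s) + 3 * (2 * t) / 108)
      = fun t : ℝ => deriv (deriv (deriv c)) (t / s) * (1 / s) * (1 / s) * (1 / s) + 3 * 2 / 108 := by
    funext t; exact (h3 t).deriv
  have hiter : iteratedDeriv 3 (fun t : ℝ => c (t / s) + t ^ 3 / 108) τ
      = deriv (deriv (deriv c)) (τ / s) * (1 / s) * (1 / s) * (1 / s) + 3 * 2 / 108 := by
    have : iteratedDeriv 3 (fun t : ℝ => c (t / s) + t ^ 3 / 108)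
        = deriv (deriv (deriv (fun t : ℝ => c (t / s) + t ^ 3 / 108))) := by
      simp [iteratedDeriv_succ, iteratedDeriv_zero]
    rw [this, e1, e2, e3]
  have hiterc : iteratedDeriv 3 c (τ / s) = deriv (deriv (deriv c)) (τ / s) := by
    simp [iteratedDeriv_succ, iteratedDeriv_zero]
  -- the ODE at τ / s
  have hode' := hode (τ / s)
  rw [hiterc] at hode'
  have h32 : (2:ℝ) ^ ((3:ℝ)/2) = 2 * s := by
    rw [show ((3:ℝ)/2) = 1 + 1/2 by norm_num, Real.rpow_add (by norm_num), Real.rpow_one,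
      hsdef, Real.sqrt_eq_rpow]
  rw [h32] at hode'
  rw [hiter, (h1 τ).deriv]
  have hinv : (1:ℝ) / s = s / 2 := by
    rw [div_eq_div_iff hs (by norm_num)]
    linear_combination -hs2
  have hdivs : τ / s = τ * (s / 2) := by
    rw [div_eq_iff hs]
    linear_combination (-τ/2) * hs2
  rw [hdivs] at hode'
  rw [hdivs, hinv]
  set C := c (τ * (s / 2))
  set C1 := deriv c (τ * (s / 2))
  set C3 := deriv (deriv (deriv c)) (τ * (s / 2))
  linear_combination (s ^ 3 / 8) * hode' +
    (-(3/4) * C1 ^ 2 * s ^ 2 - ((1/24) * C1 * τ ^ 2 * s + (1/4) * τ * C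
      + (1/72) * (1 + 3 * α - 3 * α ^ 2)) * (s ^ 2 + 2)) * hs2
end

section
/- Suppose c : ℝ → ℝ is smooth and satisfies c''' + 3·2^(3/2)·(c')² + (4/3)τ²c' + 4τc + (√2/9)(1 + 3α − 3α²) = 0 for all τ. Define v(τ) = 3√6 · c'(3^(1/4)·τ/2). Then v satisfies v⁗ + (v')² + v·v'' + (τ²/4)·v'' + (7τ/4)·v' + 2v = 0 for all τ ∈ ℝ (the similarity reduction of the Boussinesq equation). -/
open Real Set
open scoped ContDiff

private lemma auxchain (g : ℝ → ℝ) (hg : ContDiff ℝ ∞ g) (M b : ℝ) (n : ℕ) (τ : ℝ) :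
    iteratedDeriv n (fun t : ℝ => M * g (b * t / 2)) τ
      = M * ((b / 2) ^ n * iteratedDeriv n g (b * τ / 2)) := by
  have h1 : (fun t : ℝ => M * g (b * t / 2)) = fun t : ℝ => M * (fun x : ℝ => g (b / 2 * x)) t := by
    funext t
    rw [show b * t / 2 = b / 2 * t by ring]
  have hcomp : ContDiff ℝ (n : ℕ) fun x : ℝ => g (b / 2 * x) :=
    (hg.of_le (by exact_mod_cast le_top)).comp (contDiff_const.mul contDiff_id)
  rw [h1, ← iteratedDerivWithin_univ,
    iteratedDerivWithin_const_mul (Set.mem_univ τ) uniqueDiffOn_univ M (hcomp.contDiffOn.contDiffWithinAt (Set.mem_univ τ)),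
    iteratedDerivWithin_univ, iteratedDeriv_comp_const_mul (hg.of_le (by exact_mod_cast le_top : (n : WithTop ℕ∞) ≤ ∞)) (b / 2)]
  rw [show b * τ / 2 = b / 2 * τ by ring]

/-- If c : ℝ → ℝ is smooth and satisfies
`c''' + 3·2^(3/2)(c')² + (4/3)τ²c' + 4τc + (√2/9)(1 + 3α − 3α²) = 0` for all τ,
then `v(τ) = 3√6·c'(3^(1/4)τ/2)` satisfies
`v⁗ + (v')² + v·v'' + (τ²/4)v'' + (7τ/4)v' + 2v = 0` for all τ
(the similarity reduction of the Boussinesq equation). -/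
theorem stmt12 (α : ℝ) (c : ℝ → ℝ) (hc : ContDiff ℝ (⊤ : ℕ∞) c)
    (hode : ∀ τ : ℝ,
      iteratedDeriv 3 c τ + 3 * (2 : ℝ) ^ ((3 : ℝ) / 2) * (deriv c τ) ^ 2
          + (4 / 3) * τ ^ 2 * deriv c τ + 4 * τ * c τ
          + (Real.sqrt 2 / 9) * (1 + 3 * α - 3 * α ^ 2) = 0) :
    ∀ τ : ℝ,
      iteratedDeriv 4 (fun t : ℝ => 3 * Real.sqrt 6 * deriv c ((3 : ℝ) ^ ((1 : ℝ) / 4) * t / 2)) τ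
          + (deriv (fun t : ℝ => 3 * Real.sqrt 6 * deriv c ((3 : ℝ) ^ ((1 : ℝ) / 4) * t / 2)) τ) ^ 2
          + (3 * Real.sqrt 6 * deriv c ((3 : ℝ) ^ ((1 : ℝ) / 4) * τ / 2))
            * iteratedDeriv 2 (fun t : ℝ => 3 * Real.sqrt 6 * deriv c ((3 : ℝ) ^ ((1 : ℝ) / 4) * t / 2)) τ
          + (τ ^ 2 / 4)
            * iteratedDeriv 2 (fun t : ℝ => 3 * Real.sqrt 6 * deriv c ((3 : ℝ) ^ ((1 : ℝ) / 4) * t / 2)) τ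
          + (7 * τ / 4)
            * deriv (fun t : ℝ => 3 * Real.sqrt 6 * deriv c ((3 : ℝ) ^ ((1 : ℝ) / 4) * t / 2)) τ
          + 2 * (3 * Real.sqrt 6 * deriv c ((3 : ℝ) ^ ((1 : ℝ) / 4) * τ / 2)) = 0 := by
  set K : ℝ := Real.sqrt 2 / 9 * (1 + 3 * α - 3 * α ^ 2) with hK
  have hcI : ContDiff ℝ ∞ c := hc.of_le (by simp)
  have hc1 : ContDiff ℝ ∞ (deriv c) := (contDiff_infty_iff_deriv.mp hcI).2
  have hc2 : ContDiff ℝ ∞ (deriv (deriv c)) := (contDiff_infty_iff_deriv.mp hc1).2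
  have h1le : (1 : WithTop ℕ∞) ≤ ∞ := by exact_mod_cast le_top
  have e2 : iteratedDeriv 2 c = deriv (deriv c) := by
    rw [iteratedDeriv_succ, iteratedDeriv_one]
  have e3 : iteratedDeriv 3 c = deriv (deriv (deriv c)) := by
    rw [iteratedDeriv_succ, e2]
  have e4 : iteratedDeriv 4 c = deriv (deriv (deriv (deriv c))) := by
    rw [iteratedDeriv_succ, e3]
  have hd0 : ∀ x : ℝ, HasDerivAt c (deriv c x) x := fun x =>
    (hcI.differentiable (by simp) x).hasDerivAt
  have hd1 : ∀ x : ℝ, HasDerivAt (deriv c) (iteratedDeriv 2 c x) x := by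
    intro x; rw [e2]; exact (hc1.differentiable (by simp) x).hasDerivAt
  have hd2 : ∀ x : ℝ, HasDerivAt (iteratedDeriv 2 c) (iteratedDeriv 3 c x) x := by
    intro x; rw [e2, e3]; exact (hc2.differentiable (by simp) x).hasDerivAt
  have hB : (2 : ℝ) ^ ((3 : ℝ) / 2) = 2 * Real.sqrt 2 := by
    rw [show (3 : ℝ) / 2 = 1 + 1 / 2 by norm_num, Real.rpow_add (by norm_num), Real.rpow_one,
      Real.sqrt_eq_rpow]
  have h3 : ∀ x : ℝ, iteratedDeriv 3 c x
      = -(3 * (2 * Real.sqrt 2) * (deriv c x) ^ 2 + 4 / 3 * x ^ 2 * deriv c x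
          + 4 * x * c x + K) := by
    intro x
    have h := hode x
    rw [hB] at h
    linarith
  have e3f : iteratedDeriv 3 c
      = fun y : ℝ => -(3 * (2 * Real.sqrt 2) * (deriv c y) ^ 2 + 4 / 3 * y ^ 2 * deriv c y
          + 4 * y * c y + K) := funext h3
  have h4 : ∀ x : ℝ, iteratedDeriv 4 c x
      = -(12 * Real.sqrt 2 * deriv c x * iteratedDeriv 2 c x
          + 4 / 3 * x ^ 2 * iteratedDeriv 2 c x + 20 / 3 * x * deriv c x + 4 * c x) := by
    intro x
    have H :=
      ((((((hd1 x).pow 2).const_mul (3 * (2 * Real.sqrt 2))).add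
          ((((hasDerivAt_pow 2 x).const_mul ((4 : ℝ) / 3)).mul (hd1 x)))).add
            ((hasDerivAt_id' x).const_mul (4 : ℝ) |>.mul (hd0 x))).add
        (hasDerivAt_const x K)).neg
    have s4 : iteratedDeriv 4 c = deriv (iteratedDeriv 3 c) := iteratedDeriv_succ
    rw [s4, e3f]
    refine H.deriv.trans ?_
    push_cast
    ring
  have e4f : iteratedDeriv 4 c
      = fun y : ℝ => -(12 * Real.sqrt 2 * deriv c y * iteratedDeriv 2 c y
          + 4 / 3 * y ^ 2 * iteratedDeriv 2 c y + 20 / 3 * y * deriv c y + 4 * c y) :=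
    funext h4
  have h5 : ∀ x : ℝ, iteratedDeriv 5 c x
      = -(12 * Real.sqrt 2 * (iteratedDeriv 2 c x) ^ 2
          + 12 * Real.sqrt 2 * deriv c x * iteratedDeriv 3 c x
          + 4 / 3 * x ^ 2 * iteratedDeriv 3 c x + 28 / 3 * x * iteratedDeriv 2 c x
          + 32 / 3 * deriv c x) := by
    intro x
    have H :=
      (((((hd1 x).const_mul (12 * Real.sqrt 2) |>.mul (hd2 x)).add
          ((hasDerivAt_pow 2 x).const_mul ((4 : ℝ) / 3) |>.mul (hd2 x))).add
            ((hasDerivAt_id' x).const_mul ((20 : ℝ) / 3) |>.mul (hd1 x))).add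
          ((hd0 x).const_mul (4 : ℝ))).neg
    have s5 : iteratedDeriv 5 c = deriv (iteratedDeriv 4 c) := iteratedDeriv_succ
    rw [s5, e4f]
    refine H.deriv.trans ?_
    push_cast
    ring
  -- now the main computation
  intro τ
  have e45 : iteratedDeriv 4 (deriv c) = iteratedDeriv 5 c := (iteratedDeriv_succ' (n := 4) (f := c)).symm
  have e23 : iteratedDeriv 2 (deriv c) = iteratedDeriv 3 c := (iteratedDeriv_succ' (n := 2) (f := c)).symm
  have e12 : iteratedDeriv 1 (deriv c) = iteratedDeriv 2 c := (iteratedDeriv_succ' (n := 1) (f := c)).symm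
  have ed1 : deriv (fun t : ℝ => 3 * Real.sqrt 6 * deriv c ((3 : ℝ) ^ ((1 : ℝ) / 4) * t / 2)) τ
      = iteratedDeriv 1 (fun t : ℝ => 3 * Real.sqrt 6 * deriv c ((3 : ℝ) ^ ((1 : ℝ) / 4) * t / 2)) τ := by
    rw [iteratedDeriv_one]
  rw [ed1]
  rw [auxchain (deriv c) hc1 (3 * Real.sqrt 6) ((3 : ℝ) ^ ((1 : ℝ) / 4)) 4 τ,
    auxchain (deriv c) hc1 (3 * Real.sqrt 6) ((3 : ℝ) ^ ((1 : ℝ) / 4)) 2 τ,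
    auxchain (deriv c) hc1 (3 * Real.sqrt 6) ((3 : ℝ) ^ ((1 : ℝ) / 4)) 1 τ,
    e45, e23, e12]
  rw [h5 ((3 : ℝ) ^ ((1 : ℝ) / 4) * τ / 2)]
  have h6 : Real.sqrt 6 = Real.sqrt 2 * Real.sqrt 3 := by
    rw [show (6 : ℝ) = 2 * 3 by norm_num, Real.sqrt_mul (by norm_num)]
  rw [h6]
  have hp2 : ((3 : ℝ) ^ ((1 : ℝ) / 4)) ^ 2 = Real.sqrt 3 := by
    rw [← Real.rpow_natCast ((3 : ℝ) ^ ((1 : ℝ) / 4)) 2, ← Real.rpow_mul (by norm_num)]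
    norm_num [Real.sqrt_eq_rpow]
  have hr : Real.sqrt 3 ^ 2 = 3 := Real.sq_sqrt (by norm_num)
  set p : ℝ := (3 : ℝ) ^ ((1 : ℝ) / 4) with hp
  set q : ℝ := Real.sqrt 2 with hq
  set r : ℝ := Real.sqrt 3 with hrr
  set D1 : ℝ := deriv c (p * τ / 2) with hD1
  set D2 : ℝ := iteratedDeriv 2 c (p * τ / 2) with hD2
  set D3 : ℝ := iteratedDeriv 3 c (p * τ / 2) with hD3
  linear_combination
    (-2 * q * r * D1 - (1 / 16) * q * r ^ 2 * τ ^ 2 * D3 - (7 / 8) * p * q * r * τ * D2) * hr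
    + ((3 / 16) * q * r * τ ^ 2 * D3 - 2 * q * r ^ 2 * D1 - (1 / 16) * q * r ^ 3 * τ ^ 2 * D3
        - (7 / 8) * p * q * r ^ 2 * τ * D2 - 2 * p ^ 2 * q * r * D1
        - (1 / 16) * p ^ 2 * q * r ^ 2 * τ ^ 2 * D3 - (9 / 4) * p ^ 2 * q ^ 2 * r * D2 ^ 2
        - (9 / 4) * p ^ 2 * q ^ 2 * r * D1 * D3 - (7 / 8) * p ^ 3 * q * r * τ * D2
        - (1 / 16) * p ^ 4 * q * r * τ ^ 2 * D3) * hp2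
end

section
/- Let τ ∈ ℝ, let a, b, c, d, f, k be differentiable functions of τ, set D = diag(1, √2, 2), A₀ = [[0,0,0],[1,0,0],[−(√2/3)τ,1,0]], A_{−1} = [[b, c+(√2/3)τ, −1],[a, −b−f+1/3, −c+(√2/3)τ],[d, k, f+2/3]], B₁ = [[0,0,0],[0,0,0],[−1,0,0]], B₀ = [[−c,1,0],[f−(√2/3)τc,0,1],[(√2/3)τ(b+f)−(a+k), b+(√2/3)τc, c]], and define A(ξ,τ) = D(2^(−3/2)A₀ + ξ^{−1}A_{−1})D^{−1}, B(ξ,τ) = D((1/2)ξB₁ + √2 B₀)D^{−1}. Then the zero-curvature equation dA/dτ − dB/dξ + AB − BA = 0 (as an identity in ξ ≠ 0) holds if and only if the six differential equations hold: c'/√2 = −c² − b − f; b'/√2 = −cf − k + (√2/3)τ(b+c²) + (2/9)τ²c; f'/√2 = −bc + a − (√2/3)τ(f+c²) + (2/9)τ²c; a'/√2 = 2bf + f² − ck + d − f/3 − (√2/3)τ(bc − a − k − c/3) − (2/9)τ²(b+f); k'/√2 = −b² − 2bf − ac − d − b/3 − (√2/3)τ(cf + a + k + c/3) + (2/9)τ²(b+f);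 d'/√2 = 2cd − bk + af + (2/3)a + (2/3)k − (√2/3)τ(f² − b² − ac − ck + (2/3)b + (2/3)f). -/
/-!
Conjugation by `D` commutes with differentiation and with commutators, so the zero-curvature
expression is `D Z D⁻¹`, where `Z` is the zero-curvature expression of the Laurent polynomials
`2^(-3/2) A₀ + ξ⁻¹ A₋₁` and `(ξ/2) B₁ + √2 B₀`. Expanding in `ξ`, the `ξ¹` coefficient is a
multiple of `⁅A₀, B₁⁆ = 0` and the `ξ⁰` coefficient vanishes identically, so `Z = ξ⁻¹ R` with the
residue `R = A₋₁' + √2 ⁅A₋₁, B₀⁆`. Its entry `R₀₂` vanishes identically, `R₁₁ = -R₀₀ - R₂₂`,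
`R₁₂ = -R₀₁`, and the six remaining entries are `x' - √2 Fₓ` for the six equations `x'/√2 = Fₓ`.
-/

/-- `√2` as a complex number. -/
noncomputable def s2C : ℂ := (Real.sqrt 2 : ℝ)

/-- D = diag(1, √2, 2). -/
noncomputable def matD : Matrix (Fin 3) (Fin 3) ℂ := Matrix.diagonal ![1, s2C, 2]

/-- The matrix A₀ of the Lax pair. -/
noncomputable def matA0 (τ : ℝ) : Matrix (Fin 3) (Fin 3) ℂ :=
  !![0, 0, 0; 1, 0, 0; -(s2C / 3) * (τ : ℂ), 1, 0]

/-- The matrix A₋₁ of the Lax pair. -/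
noncomputable def matAm1 (a b c d f k : ℝ → ℂ) (τ : ℝ) : Matrix (Fin 3) (Fin 3) ℂ :=
  !![b τ, c τ + (s2C / 3) * (τ : ℂ), -1;
     a τ, -(b τ) - f τ + 1 / 3, -(c τ) + (s2C / 3) * (τ : ℂ);
     d τ, k τ, f τ + 2 / 3]

/-- The matrix B₁ of the Lax pair. -/
noncomputable def matB1 : Matrix (Fin 3) (Fin 3) ℂ := !![0, 0, 0; 0, 0, 0; -1, 0, 0]

/-- The matrix B₀ of the Lax pair. -/
noncomputable def matB0 (a b c f k : ℝ → ℂ) (τ : ℝ) : Matrix (Fin 3) (Fin 3) ℂ :=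
  !![-(c τ), 1, 0;
     f τ - (s2C / 3) * (τ : ℂ) * c τ, 0, 1;
     (s2C / 3) * (τ : ℂ) * (b τ + f τ) - (a τ + k τ), b τ + (s2C / 3) * (τ : ℂ) * c τ, c τ]

/-- A(ξ,τ) = D(2^(−3/2)A₀ + ξ⁻¹A₋₁)D⁻¹. -/
noncomputable def laxA (a b c d f k : ℝ → ℂ) (ξ : ℂ) (τ : ℝ) : Matrix (Fin 3) (Fin 3) ℂ :=
  matD * ((((2 : ℝ) ^ (-(3 : ℝ) / 2) : ℝ) : ℂ) • matA0 τ + ξ⁻¹ • matAm1 a b c d f k τ) * matD⁻¹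

/-- B(ξ,τ) = D((1/2)ξB₁ + √2·B₀)D⁻¹. -/
noncomputable def laxB (a b c f k : ℝ → ℂ) (ξ : ℂ) (τ : ℝ) : Matrix (Fin 3) (Fin 3) ℂ :=
  matD * (((1 / 2 : ℂ) * ξ) • matB1 + s2C • matB0 a b c f k τ) * matD⁻¹

attribute [local instance] LieRing.ofAssociativeRing

namespace Matrix

variable {𝕜 R : Type*} [NontriviallyNormedField 𝕜] {l m n o : Type*}

def HasEntrywiseDerivAt [NormedAddCommGroup R] [NormedSpace 𝕜 R]
    (M : 𝕜 → Matrix m n R) (M' : Matrix m n R) (x : 𝕜) : Prop :=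
  ∀ i j, HasDerivAt (fun t => M t i j) (M' i j) x

namespace HasEntrywiseDerivAt

section NormedSpace

variable [NormedAddCommGroup R] [NormedSpace 𝕜 R] {M N : 𝕜 → Matrix m n R}
  {M' N' : Matrix m n R} {x : 𝕜}

theorem const (A : Matrix m n R) : HasEntrywiseDerivAt (fun _ => A) 0 x :=
  fun _ _ => hasDerivAt_const x _

theorem add (hM : HasEntrywiseDerivAt M M' x) (hN : HasEntrywiseDerivAt N N' x) :
    HasEntrywiseDerivAt (fun t => M t + N t) (M' + N') x :=
  fun i j => (hM i j).add (hN i j)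

theorem const_smul {S : Type*} [Semiring S] [Module S R] [SMulCommClass 𝕜 S R]
    [ContinuousConstSMul S R] (c : S) (hM : HasEntrywiseDerivAt M M' x) :
    HasEntrywiseDerivAt (fun t => c • M t) (c • M') x :=
  fun i j => (hM i j).const_smul c

theorem smul_const {φ : 𝕜 → 𝕜} {φ' : 𝕜} (hφ : HasDerivAt φ φ' x) (A : Matrix m n R) :
    HasEntrywiseDerivAt (fun t => φ t • A) (φ' • A) x :=
  fun i j => hφ.smul_const (A i j)

theorem deriv_apply (hM : HasEntrywiseDerivAt M M' x) (i : m) (j : n) :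
    deriv (fun t => M t i j) x = M' i j :=
  (hM i j).deriv

end NormedSpace

variable [NormedRing R] [NormedAlgebra 𝕜 R] {x : 𝕜}

theorem const_mul [Fintype m] {M : 𝕜 → Matrix m n R} {M' : Matrix m n R}
    (P : Matrix l m R) (hM : HasEntrywiseDerivAt M M' x) :
    HasEntrywiseDerivAt (fun t => P * M t) (P * M') x := fun i j => by
  simp only [mul_apply]
  exact HasDerivAt.fun_sum fun k _ => (hM k j).const_mul (P i k)

theorem mul_const [Fintype n] {M : 𝕜 → Matrix m n R} {M' : Matrix m n R}
    (hM : HasEntrywiseDerivAt M M' x) (Q : Matrix n o R) :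
    HasEntrywiseDerivAt (fun t => M t * Q) (M' * Q) x := fun i j => by
  simp only [mul_apply]
  exact HasDerivAt.fun_sum fun k _ => (hM i k).mul_const (Q k j)

end HasEntrywiseDerivAt

section Conjugation

variable {α : Type*} [Fintype n] [DecidableEq n] [CommRing α] {P : Matrix n n α}

theorem conj_lie_conj (hP : IsUnit P.det) (X Y : Matrix n n α) :
    ⁅P * X * P⁻¹, P * Y * P⁻¹⁆ = P * ⁅X, Y⁆ * P⁻¹ := by
  simp only [Ring.lie_def, Matrix.mul_sub, Matrix.sub_mul, Matrix.mul_assoc,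
    nonsing_inv_mul_cancel_left P _ hP]

theorem conj_eq_zero_iff (hP : IsUnit P.det) {X : Matrix n n α} :
    P * X * P⁻¹ = 0 ↔ X = 0 := by
  have hPu : IsUnit P := (isUnit_iff_isUnit_det P).mpr hP
  rw [(isUnit_nonsing_inv_iff.mpr hPu).mul_left_eq_zero, hPu.mul_right_eq_zero]

end Conjugation

end Matrix

open Matrix

lemma s2C_sq : s2C ^ 2 = 2 := by
  rw [s2C, ← Complex.ofReal_pow]
  norm_num

lemma s2C_ne_zero : s2C ≠ 0 := by
  simp [s2C]

lemma two_rpow_neg_three_halves : (((2 : ℝ) ^ (-(3 : ℝ) / 2) : ℝ) : ℂ) = s2C / 4 := by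
  rw [show -(3 : ℝ) / 2 = 1 / 2 - 2 by norm_num, Real.rpow_sub two_pos, ← Real.sqrt_eq_rpow,
    Real.rpow_two, s2C]
  push_cast
  ring

lemma hasDerivAt_const_mul_ofReal (z : ℂ) (τ : ℝ) :
    HasDerivAt (fun t : ℝ => z * (t : ℂ)) z τ := by
  simpa using ((hasDerivAt_id τ).ofReal_comp).const_mul z

lemma isUnit_det_matD : IsUnit matD.det := by
  simp [matD, det_diagonal, Fin.prod_univ_three, s2C_ne_zero]

noncomputable def matA0Deriv : Matrix (Fin 3) (Fin 3) ℂ := !![0, 0, 0; 0, 0, 0; -(s2C / 3), 0, 0]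

noncomputable def matAm1Deriv (a b c d f k : ℝ → ℂ) (τ : ℝ) : Matrix (Fin 3) (Fin 3) ℂ :=
  !![deriv b τ, deriv c τ + s2C / 3, 0;
     deriv a τ, -deriv b τ - deriv f τ, -deriv c τ + s2C / 3;
     deriv d τ, deriv k τ, deriv f τ]

noncomputable def zeroCurvatureResidue (a b c d f k : ℝ → ℂ) (τ : ℝ) : Matrix (Fin 3) (Fin 3) ℂ :=
  matAm1Deriv a b c d f k τ + s2C • ⁅matAm1 a b c d f k τ, matB0 a b c f k τ⁆

section
variable {a b c d f k : ℝ → ℂ}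

lemma hasEntrywiseDerivAt_matA0 (τ : ℝ) : HasEntrywiseDerivAt matA0 matA0Deriv τ := by
  have hτ := hasDerivAt_const_mul_ofReal (s2C / 3) τ
  intro i j
  fin_cases i <;> fin_cases j <;> simp [matA0, matA0Deriv] <;> first
    | exact hasDerivAt_const τ _
    | exact hτ.neg

lemma hasEntrywiseDerivAt_matAm1 (ha : Differentiable ℝ a) (hb : Differentiable ℝ b)
    (hc : Differentiable ℝ c) (hd : Differentiable ℝ d) (hf : Differentiable ℝ f)
    (hk : Differentiable ℝ k) (τ : ℝ) :
    HasEntrywiseDerivAt (matAm1 a b c d f k) (matAm1Deriv a b c d f k τ) τ := by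
  have hτ := hasDerivAt_const_mul_ofReal (s2C / 3) τ
  intro i j
  fin_cases i <;> fin_cases j <;> simp [matAm1, matAm1Deriv] <;> first
    | fun_prop
    | exact (hc τ).hasDerivAt.add hτ
    | exact (hb τ).hasDerivAt.neg.sub (hf τ).hasDerivAt
    | exact (hc τ).hasDerivAt.neg.add hτ
    | exact hasDerivAt_const τ _

lemma hasEntrywiseDerivAt_laxA (ha : Differentiable ℝ a) (hb : Differentiable ℝ b)
    (hc : Differentiable ℝ c) (hd : Differentiable ℝ d) (hf : Differentiable ℝ f)
    (hk : Differentiable ℝ k) (ξ : ℂ) (τ : ℝ) :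
    HasEntrywiseDerivAt (laxA a b c d f k ξ)
      (matD * ((s2C / 4) • matA0Deriv + ξ⁻¹ • matAm1Deriv a b c d f k τ) * matD⁻¹) τ := by
  rw [← two_rpow_neg_three_halves]
  exact ((((hasEntrywiseDerivAt_matA0 τ).const_smul _).add
    ((hasEntrywiseDerivAt_matAm1 ha hb hc hd hf hk τ).const_smul ξ⁻¹)).const_mul matD).mul_const _

lemma hasEntrywiseDerivAt_laxB (ξ : ℂ) (τ : ℝ) :
    HasEntrywiseDerivAt (fun z => laxB a b c f k z τ)
      (matD * ((1 / 2 : ℂ) • matB1) * matD⁻¹) ξ := by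
  have hφ : HasDerivAt (fun z : ℂ => 1 / 2 * z) (1 / 2) ξ := by
    simpa using (hasDerivAt_id ξ).const_mul (1 / 2 : ℂ)
  have h := (((HasEntrywiseDerivAt.smul_const hφ matB1).add
    (HasEntrywiseDerivAt.const (s2C • matB0 a b c f k τ))).const_mul matD).mul_const matD⁻¹
  rwa [add_zero] at h

lemma matA0_lie_matB1 (τ : ℝ) : ⁅matA0 τ, matB1⁆ = 0 := by
  ext i j
  fin_cases i <;> fin_cases j <;> simp [Ring.lie_def, matA0, matB1]

lemma zeroCurvature_constCoeff_eq_zero (τ : ℝ) :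
    (s2C / 4) • matA0Deriv - (1 / 2 : ℂ) • matB1 + (s2C / 4 * s2C) • ⁅matA0 τ, matB0 a b c f k τ⁆
      + (1 / 2 : ℂ) • ⁅matAm1 a b c d f k τ, matB1⁆ = 0 := by
  have hs2 := s2C_sq
  ext i j
  fin_cases i <;> fin_cases j <;>
    simp [Ring.lie_def, matA0, matA0Deriv, matAm1, matB0, matB1] <;> grind

lemma zeroCurvature_eq_conj_residue {ξ : ℂ} (hξ : ξ ≠ 0) (τ : ℝ) :
    matD * ((s2C / 4) • matA0Deriv + ξ⁻¹ • matAm1Deriv a b c d f k τ) * matD⁻¹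
      - matD * ((1 / 2 : ℂ) • matB1) * matD⁻¹ + ⁅laxA a b c d f k ξ τ, laxB a b c f k ξ τ⁆
      = matD * (ξ⁻¹ • zeroCurvatureResidue a b c d f k τ) * matD⁻¹ := by
  rw [laxA, laxB, conj_lie_conj isUnit_det_matD, two_rpow_neg_three_halves, ← Matrix.sub_mul,
    ← Matrix.mul_sub, ← Matrix.add_mul, ← Matrix.mul_add]
  congr 2
  simp only [add_lie, lie_add, smul_lie, lie_smul, matA0_lie_matB1, smul_zero, zero_add,
    zeroCurvatureResidue, smul_add, smul_smul]
  rw [mul_inv_cancel_right₀ hξ]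
  linear_combination (norm := module) zeroCurvature_constCoeff_eq_zero (d := d) (k := k) τ

lemma zeroCurvatureResidue_eq_zero_iff (τ : ℝ) :
    zeroCurvatureResidue a b c d f k τ = 0 ↔
        deriv c τ / s2C = -(c τ) ^ 2 - b τ - f τ ∧
        deriv b τ / s2C = -(c τ) * f τ - k τ + (s2C / 3) * (τ : ℂ) * (b τ + (c τ) ^ 2)
            + (2 / 9) * (τ : ℂ) ^ 2 * c τ ∧
        deriv f τ / s2C = -(b τ) * c τ + a τ - (s2C / 3) * (τ : ℂ) * (f τ + (c τ) ^ 2)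
            + (2 / 9) * (τ : ℂ) ^ 2 * c τ ∧
        deriv a τ / s2C = 2 * b τ * f τ + (f τ) ^ 2 - c τ * k τ + d τ - f τ / 3
            - (s2C / 3) * (τ : ℂ) * (b τ * c τ - a τ - k τ - c τ / 3)
            - (2 / 9) * (τ : ℂ) ^ 2 * (b τ + f τ) ∧
        deriv k τ / s2C = -(b τ) ^ 2 - 2 * b τ * f τ - a τ * c τ - d τ - b τ / 3
            - (s2C / 3) * (τ : ℂ) * (c τ * f τ + a τ + k τ + c τ / 3)
            + (2 / 9) * (τ : ℂ) ^ 2 * (b τ + f τ) ∧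
        deriv d τ / s2C = 2 * c τ * d τ - b τ * k τ + a τ * f τ + (2 / 3) * a τ + (2 / 3) * k τ
            - (s2C / 3) * (τ : ℂ)
              * ((f τ) ^ 2 - (b τ) ^ 2 - a τ * c τ - c τ * k τ + (2 / 3) * b τ
                + (2 / 3) * f τ) := by
  have hs2 := s2C_sq
  simp only [div_eq_iff s2C_ne_zero, ← Matrix.ext_iff, Fin.forall_fin_succ, IsEmpty.forall_iff,
    and_true, zeroCurvatureResidue, Matrix.add_apply, Matrix.smul_apply, Ring.lie_def, Matrix.sub_apply,
    Matrix.mul_apply, Fin.sum_univ_three, matAm1Deriv, matAm1, matB0, of_apply, cons_val',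
    cons_val_zero, cons_val_one, cons_val_two, cons_val_succ, tail_cons, cons_val_fin_one,
    Matrix.zero_apply, smul_eq_mul, vecHead]
  constructor
  · rintro ⟨⟨h00, h01, -⟩, ⟨h10, -, -⟩, ⟨h20, h21, h22⟩⟩
    refine ⟨?_, ?_, ?_, ?_, ?_, ?_⟩
    · linear_combination h01
    · linear_combination h00 + (s2C / 9 * c τ * τ ^ 2) * hs2
    · linear_combination h22 + (s2C / 9 * c τ * τ ^ 2) * hs2
    · linear_combination h10 - (s2C / 9 * τ ^ 2 * (b τ + f τ)) * hs2
    · linear_combination h21 + (s2C / 9 * τ ^ 2 * (b τ + f τ)) * hs2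
    · linear_combination h20
  · rintro ⟨hc', hb', hf', ha', hk', hd'⟩
    refine ⟨⟨?_, ?_, ?_⟩, ⟨?_, ?_, ?_⟩, ⟨?_, ?_, ?_⟩⟩
    · linear_combination hb' - (s2C / 9 * c τ * τ ^ 2) * hs2
    · linear_combination hc'
    · ring
    · linear_combination ha' + (s2C / 9 * τ ^ 2 * (b τ + f τ)) * hs2
    · linear_combination -hb' - hf' + (2 * s2C / 9 * c τ * τ ^ 2) * hs2
    · linear_combination -hc'
    · linear_combination hd'
    · linear_combination hk' - (s2C / 9 * τ ^ 2 * (b τ + f τ)) * hs2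
    · linear_combination hf' - (s2C / 9 * c τ * τ ^ 2) * hs2

lemma zeroCurvature_iff_residue_eq_zero (ha : Differentiable ℝ a) (hb : Differentiable ℝ b)
    (hc : Differentiable ℝ c) (hd : Differentiable ℝ d) (hf : Differentiable ℝ f)
    (hk : Differentiable ℝ k) {ξ : ℂ} (hξ : ξ ≠ 0) (τ : ℝ) :
    (∀ i j : Fin 3,
        deriv (fun t : ℝ => laxA a b c d f k ξ t i j) τ
            - deriv (fun z : ℂ => laxB a b c f k z τ i j) ξ
            + (laxA a b c d f k ξ τ * laxB a b c f k ξ τ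
              - laxB a b c f k ξ τ * laxA a b c d f k ξ τ) i j = 0) ↔
      zeroCurvatureResidue a b c d f k τ = 0 := by
  simp only [(hasEntrywiseDerivAt_laxA ha hb hc hd hf hk ξ τ).deriv_apply,
    (hasEntrywiseDerivAt_laxB ξ τ).deriv_apply, ← Ring.lie_def, ← Matrix.sub_apply,
    ← Matrix.add_apply, zeroCurvature_eq_conj_residue hξ]
  rw [← smul_eq_zero_iff_right (inv_ne_zero hξ), ← conj_eq_zero_iff isUnit_det_matD,
    ← Matrix.ext_iff]
  rfl

end

/-- For differentiable a, b, c, d, f, k : ℝ → ℂ, the zero-curvature equation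
`dA/dτ − dB/dξ + AB − BA = 0` (as an identity in ξ ≠ 0, entrywise) holds if and only if
the six stated differential equations hold for all τ. -/
theorem stmt13 (a b c d f k : ℝ → ℂ)
    (ha : Differentiable ℝ a) (hb : Differentiable ℝ b) (hc : Differentiable ℝ c)
    (hd : Differentiable ℝ d) (hf : Differentiable ℝ f) (hk : Differentiable ℝ k) :
    (∀ ξ : ℂ, ξ ≠ 0 → ∀ τ : ℝ, ∀ i j : Fin 3,
        deriv (fun t : ℝ => laxA a b c d f k ξ t i j) τ
            - deriv (fun z : ℂ => laxB a b c f k z τ i j) ξ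
            + (laxA a b c d f k ξ τ * laxB a b c f k ξ τ
              - laxB a b c f k ξ τ * laxA a b c d f k ξ τ) i j = 0) ↔
      (∀ τ : ℝ,
        deriv c τ / s2C = -(c τ) ^ 2 - b τ - f τ ∧
        deriv b τ / s2C = -(c τ) * f τ - k τ + (s2C / 3) * (τ : ℂ) * (b τ + (c τ) ^ 2)
            + (2 / 9) * (τ : ℂ) ^ 2 * c τ ∧
        deriv f τ / s2C = -(b τ) * c τ + a τ - (s2C / 3) * (τ : ℂ) * (f τ + (c τ) ^ 2)
            + (2 / 9) * (τ : ℂ) ^ 2 * c τ ∧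
        deriv a τ / s2C = 2 * b τ * f τ + (f τ) ^ 2 - c τ * k τ + d τ - f τ / 3
            - (s2C / 3) * (τ : ℂ) * (b τ * c τ - a τ - k τ - c τ / 3)
            - (2 / 9) * (τ : ℂ) ^ 2 * (b τ + f τ) ∧
        deriv k τ / s2C = -(b τ) ^ 2 - 2 * b τ * f τ - a τ * c τ - d τ - b τ / 3
            - (s2C / 3) * (τ : ℂ) * (c τ * f τ + a τ + k τ + c τ / 3)
            + (2 / 9) * (τ : ℂ) ^ 2 * (b τ + f τ) ∧
        deriv d τ / s2C = 2 * c τ * d τ - b τ * k τ + a τ * f τ + (2 / 3) * a τ + (2 / 3) * k τ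
            - (s2C / 3) * (τ : ℂ)
              * ((f τ) ^ 2 - (b τ) ^ 2 - a τ * c τ - c τ * k τ + (2 / 3) * b τ + (2 / 3) * f τ)) := by
  refine ⟨fun h τ => ?_, fun h ξ hξ τ => ?_⟩
  · rw [← zeroCurvatureResidue_eq_zero_iff,
      ← zeroCurvature_iff_residue_eq_zero ha hb hc hd hf hk one_ne_zero]
    exact h 1 one_ne_zero τ
  · rw [zeroCurvature_iff_residue_eq_zero ha hb hc hd hf hk hξ, zeroCurvatureResidue_eq_zero_iff]
    exact h τ
end
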